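/- Let A be an algebra with a term t Mal'cev modulo F and G. Then for every reflexive admissible relation R on A: R* ⊆ (F(R))* ∘ R ∘ (G(R))*, where T* denotes the transitive closure of T. -/

import Mathlib

structure Signature where
  symbols : Type
  arity : symbols → ℕ

structure UAAlgebra (σ : Signature) where
  carrier : Type
  ops : ∀ s, (Fin (σ.arity s) → carrier) → carrier

namespace Paper

variable {σ : Signature}

/-- Binary relations on the carrier of an algebra. -/
abbrev Rel (A : UAAlgebra σ) := A.carrier → A.carrier → Prop

/-- A relation is admissible (compatible) if it is preserved by all operations,
i.e. it is a subalgebra of `A × A`. -/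
def Compatible (A : UAAlgebra σ) (R : Rel A) : Prop :=
  ∀ s (f g : Fin (σ.arity s) → A.carrier),
    (∀ j, R (f j) (g j)) → R (A.ops s f) (A.ops s g)

/-- Reflexive and admissible. -/
def RAdm (A : UAAlgebra σ) (R : Rel A) : Prop :=
  Reflexive R ∧ Compatible A R

/-- Relational composition. -/
def comp {A : UAAlgebra σ} (R S : Rel A) : Rel A :=
  fun a c => ∃ b, R a b ∧ S b c

/-- `cl A X` : the least compatible relation containing `X`. -/
def cl (A : UAAlgebra σ) (X : Rel A) : Rel A :=
  fun a b => ∀ S : Rel A, Compatible A S → (∀ x y, X x y → S x y) → S a b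

/-- The least reflexive compatible relation containing `X`. -/
def clRefl (A : UAAlgebra σ) (X : Rel A) : Rel A :=
  fun a b => ∀ S : Rel A, Reflexive S → Compatible A S → (∀ x y, X x y → S x y) → S a b

/-- `altComp R S n` is `R ∘ₙ S`, the alternating composition
`R ∘ S ∘ R ∘ ⋯` with `n` factors (`n - 1` occurrences of `∘`);
by convention `R ∘₀ S` is the identity relation. -/
def altComp {A : UAAlgebra σ} (R S : Rel A) : ℕ → Rel A
  | 0 => Eq
  | n + 1 => comp R (altComp S R n)

/-- `relPow R n = Rⁿ`, with `R⁰` the identity relation. -/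
def relPow {A : UAAlgebra σ} (R : Rel A) : ℕ → Rel A
  | 0 => Eq
  | n + 1 => comp R (relPow R n)

/-- The join `R + S = ⋃ₙ R ∘ₙ S`. -/
def join {A : UAAlgebra σ} (R S : Rel A) : Rel A :=
  fun a b => ∃ n, altComp R S n a b

/-- Converse relation `R⁻`. -/
def conv {A : UAAlgebra σ} (R : Rel A) : Rel A :=
  fun a b => R b a

/-- Composition of a finite list of relations (empty list gives the identity). -/
def compList {A : UAAlgebra σ} : List (Rel A) → Rel A
  | [] => Eq
  | r :: l => comp r (compList l)

/-- Join of a family of relations: the union of all finite compositions of members. -/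
def joinFam {A : UAAlgebra σ} {ι : Type} (R : ι → Rel A) : Rel A :=
  fun a b => ∃ l : List ι, compList (l.map R) a b

/-- The smallest congruence containing `X`. -/
def cg (A : UAAlgebra σ) (X : Rel A) : Rel A :=
  fun a b => ∀ S : Rel A, Equivalence S → Compatible A S →
    (∀ x y, X x y → S x y) → S a b

/-- Terms of the signature `σ` in `n` variables. -/
inductive Term (σ : Signature) (n : ℕ) : Type
  | var : Fin n → Term σ n
  | op : ∀ s, (Fin (σ.arity s) → Term σ n) → Term σ n

/-- Evaluation of a term in an algebra under an environment. -/
def Term.eval {n : ℕ} (A : UAAlgebra σ) (env : Fin n → A.carrier) : Term σ n → A.carrier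
  | .var k => env k
  | .op s args => A.ops s fun j => (args j).eval A env

/-- The ternary term operation induced by a ternary term. -/
def tApp (A : UAAlgebra σ) (t : Term σ 3) (a b c : A.carrier) : A.carrier :=
  t.eval A ![a, b, c]

/-- `t` is Mal'cev modulo `F` and `G`: whenever `a R b` with `R` reflexive admissible,
`a F(R) t(a,b,b)` and `t(a,a,b) G(R) b`. -/
def MalcevMod (A : UAAlgebra σ) (F G : Rel A → Rel A) (t : Term σ 3) : Prop :=
  ∀ R : Rel A, RAdm A R → ∀ a b : A.carrier, R a b →
    F R a (tApp A t a b b) ∧ G R (tApp A t a a b) b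


/-!
Along an `R`-chain `c₀ R c₁ R ⋯ R cₙ₊₁` the elements `t(c₀, c₁, c₁)` and `t(cᵢ, cᵢ, cᵢ₊₁)` for
`1 ≤ i ≤ n` again form an `R`-chain, by compatibility, but one step shorter; it starts at an
`F(R)`-successor of `c₀` and ends at a `G(R)`-predecessor of `cₙ₊₁`. Iterating shortens any chain
to a single `R`-step flanked by `F(R)`- and `G(R)`-chains.
-/

variable {A : UAAlgebra σ}

theorem Compatible.term_eval {S : Rel A} (hS : Compatible A S) {n : ℕ} (u : Term σ n)
    {e₁ e₂ : Fin n → A.carrier} (h : ∀ k, S (e₁ k) (e₂ k)) :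
    S (u.eval A e₁) (u.eval A e₂) := by
  induction u with
  | var k => exact h k
  | op s args ih => exact hS s _ _ ih

theorem Compatible.tApp {S : Rel A} (hS : Compatible A S) (t : Term σ 3)
    {x₁ y₁ z₁ x₂ y₂ z₂ : A.carrier} (hx : S x₁ x₂) (hy : S y₁ y₂) (hz : S z₁ z₂) :
    S (tApp A t x₁ y₁ z₁) (tApp A t x₂ y₂ z₂) :=
  hS.term_eval t fun k => by fin_cases k <;> assumption

theorem exists_relPow_succ_of_transGen {R : Rel A} {a c : A.carrier}
    (h : Relation.TransGen R a c) : ∃ n, relPow R (n + 1) a c := by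
  induction h using Relation.TransGen.head_induction_on with
  | single hac => exact ⟨0, _, hac, rfl⟩
  | head hab _ ih =>
    obtain ⟨n, hn⟩ := ih
    exact ⟨n + 1, _, hab, hn⟩

namespace MalcevMod

variable {F G : Rel A → Rel A} {t : Term σ 3} {R : Rel A}

theorem comp_relPow_G_tApp (ht : MalcevMod A F G t) (hR : RAdm A R) :
    ∀ {n : ℕ} {a b c : A.carrier}, R a b → relPow R n b c →
      comp (relPow R n) (G R) (tApp A t a a b) c
  | 0, a, b, _, hab, rfl => ⟨_, rfl, (ht R hR a b hab).2⟩
  | _ + 1, _, _, _, hab, ⟨_, hbm, hmc⟩ =>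
    have ⟨e, hchain, he⟩ := ht.comp_relPow_G_tApp hR hbm hmc
    ⟨e, ⟨_, hR.2.tApp t hab hab hbm, hchain⟩, he⟩

theorem comp_F_relPow_G_of_relPow_add_two (ht : MalcevMod A F G t) (hR : RAdm A R)
    {n : ℕ} {a c : A.carrier} (h : relPow R (n + 2) a c) :
    comp (F R) (comp (relPow R (n + 1)) (G R)) a c := by
  obtain ⟨b, hab, m, hbm, hmc⟩ := h
  obtain ⟨e, hchain, he⟩ := ht.comp_relPow_G_tApp hR hbm hmc
  exact ⟨tApp A t a b b, (ht R hR a b hab).1,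
    e, ⟨_, hR.2.tApp t hab (hR.1 b) hbm, hchain⟩, he⟩

theorem comp_transGen_of_relPow_succ (ht : MalcevMod A F G t) (hR : RAdm A R)
    (hFR : ∀ x, F R x x) (hGR : ∀ x, G R x x) :
    ∀ {n : ℕ} {a c : A.carrier}, relPow R (n + 1) a c →
      comp (Relation.TransGen (F R)) (comp R (Relation.TransGen (G R))) a c
  | 0, a, c, ⟨_, hac, rfl⟩ => ⟨a, .single (hFR a), c, hac, .single (hGR c)⟩
  | _ + 1, _, _, h =>
    have ⟨_, haa', _, hchain, hec⟩ := ht.comp_F_relPow_G_of_relPow_add_two hR h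
    have ⟨x, hax, y, hxy, hye⟩ := ht.comp_transGen_of_relPow_succ hR hFR hGR hchain
    ⟨x, .head haa' hax, y, hxy, .tail hye hec⟩

end MalcevMod

end Paper

open Paper
/-- Theorem 1(viii): `R* ⊆ (F(R))* ∘ R ∘ (G(R))*` (transitive closures). -/
theorem stmt7 {σ : Signature} (A : UAAlgebra σ) (F G : Rel A → Rel A)
    (hF : ∀ R, RAdm A R → RAdm A (F R)) (hG : ∀ R, RAdm A R → RAdm A (G R))
    (t : Term σ 3) (ht : MalcevMod A F G t)
    (R : Rel A) (hR : RAdm A R) :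
    ∀ a c, Relation.TransGen R a c →
      comp (Relation.TransGen (F R)) (comp R (Relation.TransGen (G R))) a c := by
  intro a c h
  obtain ⟨n, hn⟩ := exists_relPow_succ_of_transGen h
  exact ht.comp_transGen_of_relPow_succ hR (hF R hR).1 (hG R hR).1 hn
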